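/- Suppose $A$ admits a normalized invariant integral $w_G$. For finite-dimensional $A$-comodules $(V, \rho_V)$ and $(W, \rho_W)$, let $\mathrm{Hom}^G(V,W)$ denote the space of $K$-linear maps $f : V \to W$ satisfying $\rho_W \circ f = (f \otimes \mathrm{id}_A) \circ \rho_V$. Then $w_G\big( S(\chi_V)\, \chi_W \big) = (\dim_K \mathrm{Hom}^G(V,W)) \cdot 1_K$, where the product $S(\chi_V)\,\chi_W$ is taken in $A$. -/

import Mathlib

open TensorProduct

noncomputable section

variable {K : Type} [Field K] {A : Type} [CommRing A] [HopfAlgebra K A]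

/-- Convolution product on the dual of a coalgebra:
`(w * w') a = ∑ w a₍₁₎ * w' a₍₂₎`. -/
def conv (w w' : Module.Dual K A) : Module.Dual K A :=
  (LinearMap.mul' K K).comp ((TensorProduct.map w w').comp (Coalgebra.comul (R := K)))

/-- Left convolution by `u`, as a linear endomorphism of the dual. -/
def convL (u : Module.Dual K A) : Module.Dual K A →ₗ[K] Module.Dual K A where
  toFun := conv u
  map_add' x y := by
    unfold conv
    rw [TensorProduct.map_add_right, LinearMap.add_comp, LinearMap.comp_add]
  map_smul' c x := by
    show (LinearMap.mul' K K).comp ((TensorProduct.map u (c • x)).comp (Coalgebra.comul (R := K))) =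
      c • (LinearMap.mul' K K).comp ((TensorProduct.map u x).comp (Coalgebra.comul (R := K)))
    rw [TensorProduct.map_smul_right, LinearMap.smul_comp, LinearMap.comp_smul]

/-- The span of `{u * w' : w' ∈ A*}`. -/
def rightOrbit (u : Module.Dual K A) : Submodule K (Module.Dual K A) :=
  Submodule.span K {x | ∃ w', x = conv u w'}

lemma rightOrbit_mapsTo (u : Module.Dual K A) :
    ∀ x ∈ rightOrbit u, convL u x ∈ rightOrbit u := by
  intro x hx
  have h : Submodule.map (convL u) (rightOrbit u) ≤ rightOrbit u := by
    rw [rightOrbit, Submodule.map_span]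
    apply Submodule.span_mono
    rintro y ⟨x, ⟨w', rfl⟩, rfl⟩
    exact ⟨conv u w', rfl⟩
  exact h ⟨x, hx, rfl⟩

/-- The trace of the finite-rank operator "left convolution by `u`", computed as the trace of
its restriction to the finite-dimensional invariant subspace `u * A*` containing its image. -/
def convTrace (u : Module.Dual K A) : K :=
  LinearMap.trace K (rightOrbit u) ((convL u).restrict (rightOrbit_mapsTo u))

/-- The span of `{w₁ * w * w₂ : w₁, w₂ ∈ A*}`. -/
def twoSidedOrbit (w : Module.Dual K A) : Submodule K (Module.Dual K A) :=
  Submodule.span K {x | ∃ w₁ w₂, x = conv w₁ (conv w w₂)}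

/-- `Ã = {w ∈ A* : dim_K (A* * w * A*) < ∞}`. -/
def tildeSet (K : Type) [Field K] (A : Type) [CommRing A] [HopfAlgebra K A] :
    Set (Module.Dual K A) :=
  {w | FiniteDimensional K (twoSidedOrbit w)}

/-- A normalized invariant integral on `G = Spec A`:  `w_G(1) = 1` and
`w * w_G = w(1) w_G = w_G * w` for all `w ∈ A*`. -/
def IsNormalizedIntegral (wG : Module.Dual K A) : Prop :=
  wG 1 = 1 ∧ ∀ w : Module.Dual K A, conv w wG = w 1 • wG ∧ conv wG w = w 1 • wG
/-- `(V, ρ)` is an `A`-comodule: coassociativity and counit axioms. -/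
def IsComodule {V : Type} [AddCommGroup V] [Module K V] (ρ : V →ₗ[K] V ⊗[K] A) : Prop :=
  ((TensorProduct.assoc K V A A).toLinearMap.comp ((ρ.rTensor A).comp ρ) =
      (LinearMap.lTensor V (Coalgebra.comul (R := K))).comp ρ) ∧
  ((TensorProduct.rid K V).toLinearMap.comp
      ((LinearMap.lTensor V (Coalgebra.counit (R := K))).comp ρ) = LinearMap.id)

/-- The action of `w ∈ A*` on an `A`-comodule `(V, ρ)`: `w ⋅ v = (id ⊗ w)(ρ v)`.
As a map `π_V : A* → End_K(V)` it is a unital algebra homomorphism. -/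
def coact {V : Type} [AddCommGroup V] [Module K V] (ρ : V →ₗ[K] V ⊗[K] A)
    (w : Module.Dual K A) : V →ₗ[K] V :=
  (TensorProduct.rid K V).toLinearMap.comp ((LinearMap.lTensor V w).comp ρ)

/-- The character of a finite-dimensional comodule, computed with respect to a basis `b`:
`χ_V = ∑ i a_{ii}` where `ρ (b j) = ∑ i b i ⊗ a_{ij}` (independent of the basis). -/
def charOf {V : Type} [AddCommGroup V] [Module K V] {ι : Type} [Fintype ι]
    (b : Module.Basis ι K V) (ρ : V →ₗ[K] V ⊗[K] A) : A :=
  ∑ i, (TensorProduct.lid K A) ((LinearMap.rTensor A (b.coord i)) (ρ (b i)))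

/-- The space `Hom^G(V, W)` of comodule homomorphisms `f : V → W`, i.e. linear maps with
`ρ_W ∘ f = (f ⊗ id) ∘ ρ_V`. -/
def homG {V W : Type} [AddCommGroup V] [Module K V] [AddCommGroup W] [Module K W]
    (ρV : V →ₗ[K] V ⊗[K] A) (ρW : W →ₗ[K] W ⊗[K] A) : Submodule K (V →ₗ[K] W) where
  carrier := {f | ρW.comp f = (f.rTensor A).comp ρV}
  add_mem' := by
    intro f g hf hg
    simp only [Set.mem_setOf_eq] at hf hg ⊢
    rw [LinearMap.comp_add, LinearMap.rTensor_add, LinearMap.add_comp, hf, hg]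
  zero_mem' := by
    simp only [Set.mem_setOf_eq, LinearMap.comp_zero, LinearMap.rTensor_zero,
      LinearMap.zero_comp]
  smul_mem' := by
    intro c f hf
    simp only [Set.mem_setOf_eq] at hf ⊢
    rw [LinearMap.comp_smul, LinearMap.rTensor_smul, LinearMap.smul_comp, hf]

/-!
Averaging against `w_G` gives a projection of `Hom_K(V, W)` onto `Hom^G(V, W)`: in matrix
coefficients `C` of `W` and `M` of `V` (so that `M⁻¹ = S(M)`) it sends `F` to `w_G(C F S(M))`,
the algebraic form of `∫ ρ_W(g) F ρ_V(g)⁻¹ dg`. Invariance of `w_G` makes the result a comodule map, and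
`w_G(1) = 1` makes it fix comodule maps. Hence `dim Hom^G(V, W)` is its trace, and on matrix units
the diagonal entries are `w_G(C k k * S(M i i))`, which add up to `w_G(S(χ_V) χ_W)`.
-/

local notation "inl" => (Algebra.TensorProduct.includeLeft : A →ₐ[K] A ⊗[K] A)
local notation "inr" => (Algebra.TensorProduct.includeRight : A →ₐ[K] A ⊗[K] A)
local notation "S" => HopfAlgebra.antipode K (A := A)

namespace TensorProduct

variable {R : Type*} [CommSemiring R] {V M : Type*} [AddCommMonoid V] [Module R V]
  [AddCommMonoid M] [Module R M] {ι : Type*} [DecidableEq ι]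

theorem sum_tmul_equivFinsuppOfBasisLeft [Fintype ι] (b : Module.Basis ι R V) (x : V ⊗[R] M) :
    ∑ i, b i ⊗ₜ equivFinsuppOfBasisLeft b x i = x := by
  conv_rhs => rw [← (equivFinsuppOfBasisLeft b).symm_apply_apply x]
  rw [equivFinsuppOfBasisLeft_symm_apply, Finsupp.sum_fintype _ _ (by simp)]

theorem equivFinsuppOfBasisLeft_sum_tmul [Fintype ι] (b : Module.Basis ι R V) (m : ι → M)
    (i : ι) :
    equivFinsuppOfBasisLeft b (∑ j, b j ⊗ₜ m j) i = m i := by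
  simp [Finsupp.single_apply]

theorem equivFinsuppOfBasisLeft_rTensor [Fintype ι] {W : Type*} [AddCommMonoid W] [Module R W]
    {κ : Type*} [Fintype κ] [DecidableEq κ] (bV : Module.Basis ι R V) (bW : Module.Basis κ R W)
    (f : V →ₗ[R] W) (x : V ⊗[R] M) (k : κ) :
    equivFinsuppOfBasisLeft bW (f.rTensor M x) k =
      ∑ i, LinearMap.toMatrix bV bW f k i • equivFinsuppOfBasisLeft bV x i := by
  induction x using TensorProduct.induction_on with
  | zero => simp
  | tmul v m =>
    simp [smul_smul, ← Finset.sum_smul,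
      ← LinearMap.toMatrix_mulVec_repr bV bW, Matrix.mulVec, dotProduct]
  | add x y hx hy => simp [hx, hy, Finset.sum_add_distrib]

end TensorProduct

theorem Matrix.map_algebraMap_smul {R B : Type*} [CommSemiring R] [Semiring B] [Algebra R B]
    {m n : Type*} (c : R) (F : Matrix m n R) :
    (c • F).map (algebraMap R B) = c • F.map (algebraMap R B) :=
  Matrix.map_smul (algebraMap R B) c (fun a => by rw [smul_eq_mul, map_mul, Algebra.smul_def]) F

theorem Matrix.stdBasis_repr_apply {R : Type*} [Semiring R] {m n : Type*} [Fintype m] [Finite n]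
    (X : Matrix m n R) (q : m × n) : (Matrix.stdBasis R m n).repr X q = X q.1 q.2 := by
  simp [Matrix.stdBasis]

theorem Matrix.mul_single_one_mul_apply_same {R : Type*} [Semiring R] {l m n o : Type*}
    [Fintype m] [Fintype n] [DecidableEq m] [DecidableEq n] (C : Matrix l m R) (B : Matrix n o R)
    (k : m) (i : n) (a : l) (b : o) :
    (C * Matrix.single k i (1 : R) * B) a b = C a k * B i b := by
  simp [Matrix.mul_apply, Matrix.single_apply, ite_and]

theorem Matrix.includeLeft_mul_includeRight_apply {R B D : Type*} [CommSemiring R] [Semiring B]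
    [Algebra R B] [Semiring D] [Algebra R D] {m l n : Type*} [Fintype l] (X : Matrix m l B)
    (Y : Matrix l n D) (i : m) (j : n) :
    (X.map (Algebra.TensorProduct.includeLeft : B →ₐ[R] B ⊗[R] D) *
        Y.map (Algebra.TensorProduct.includeRight : D →ₐ[R] B ⊗[R] D)) i j =
      ∑ k, X i k ⊗ₜ[R] Y k j := by
  simp [Matrix.mul_apply]

theorem Matrix.map_includeLeft_mul_includeRight_mul_includeLeft {R B : Type*} [CommSemiring R]
    [CommSemiring B] [Algebra R B] {m l p n : Type*} [Fintype l] [Fintype p]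
    (w : Module.Dual R B) (X : Matrix m l B) (Z : Matrix l p B) (W : Matrix p n B) :
    (X.map (Algebra.TensorProduct.includeLeft : B →ₐ[R] B ⊗[R] B) *
          Z.map (Algebra.TensorProduct.includeRight : B →ₐ[R] B ⊗[R] B) *
          W.map (Algebra.TensorProduct.includeLeft : B →ₐ[R] B ⊗[R] B)).map
        (TensorProduct.rid R B ∘ w.lTensor B) =
      X * Z.map (algebraMap R B ∘ w) * W := by
  ext i j
  simp only [Matrix.mul_apply, Matrix.map_apply, Algebra.TensorProduct.includeLeft_apply,
    Algebra.TensorProduct.includeRight_apply, Finset.sum_mul, Algebra.TensorProduct.tmul_mul_tmul,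
    mul_one, one_mul, map_sum, LinearMap.lTensor_tmul, TensorProduct.rid_tmul,
    Function.comp_apply]
  refine Finset.sum_congr rfl fun t _ => Finset.sum_congr rfl fun l _ => ?_
  rw [Algebra.smul_def]
  ring

section CoefMatrix

variable {V : Type} [AddCommGroup V] [Module K V] {ι : Type} [Fintype ι] [DecidableEq ι]

def coefMatrix (b : Module.Basis ι K V) (ρ : V →ₗ[K] V ⊗[K] A) : Matrix ι ι A :=
  Matrix.of fun i j => equivFinsuppOfBasisLeft b (ρ (b j)) i

theorem charOf_eq_trace_coefMatrix (b : Module.Basis ι K V) (ρ : V →ₗ[K] V ⊗[K] A) :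
    charOf b ρ = (coefMatrix b ρ).trace := by
  simp [charOf, coefMatrix, Matrix.trace, equivFinsuppOfBasisLeft_apply]

theorem sum_tmul_coefMatrix (b : Module.Basis ι K V) (ρ : V →ₗ[K] V ⊗[K] A) (j : ι) :
    ∑ i, b i ⊗ₜ coefMatrix b ρ i j = ρ (b j) :=
  sum_tmul_equivFinsuppOfBasisLeft b _

theorem equivFinsuppOfBasisLeft_apply_eq_sum_coefMatrix (b : Module.Basis ι K V)
    (ρ : V →ₗ[K] V ⊗[K] A) (v : V) (i : ι) :
    equivFinsuppOfBasisLeft b (ρ v) i = ∑ j, b.repr v j • coefMatrix b ρ i j := by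
  conv_lhs => rw [← b.sum_repr v]
  simp only [map_sum, map_smul, Finsupp.coe_finsetSum, Finset.sum_apply, Finsupp.coe_smul,
    Pi.smul_apply, coefMatrix, Matrix.of_apply]

variable (K) in
def IsMultiplicativeMatrix (M : Matrix ι ι A) : Prop :=
  M.map (Bialgebra.comulAlgHom K A) = M.map inl * M.map inr ∧
    M.map (Coalgebra.counit (R := K)) = 1

theorem IsComodule.isMultiplicativeMatrix_coefMatrix {ρ : V →ₗ[K] V ⊗[K] A}
    (hρ : IsComodule ρ) (b : Module.Basis ι K V) : IsMultiplicativeMatrix K (coefMatrix b ρ) := by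
  constructor
  · ext i j
    have h := congr($(hρ.1) (b j))
    simp only [LinearMap.comp_apply, LinearEquiv.coe_coe] at h
    rw [← sum_tmul_coefMatrix b ρ j] at h
    simp only [map_sum, LinearMap.rTensor_tmul, LinearMap.lTensor_tmul] at h
    simp only [← sum_tmul_coefMatrix b ρ, sum_tmul, map_sum, assoc_tmul] at h
    rw [Finset.sum_comm] at h
    simp only [← tmul_sum] at h
    have := congr(equivFinsuppOfBasisLeft b $h i)
    simp only [equivFinsuppOfBasisLeft_sum_tmul] at this
    simp [Matrix.includeLeft_mul_includeRight_apply, ← this]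
  · ext i j
    have h := congr(b.repr ($(hρ.2) (b j)) i)
    simp only [LinearMap.comp_apply, LinearMap.id_apply] at h
    rw [← sum_tmul_coefMatrix b ρ j] at h
    simp only [map_sum, LinearMap.lTensor_tmul, LinearEquiv.coe_coe, rid_tmul, map_smul,
      Module.Basis.repr_self, Finsupp.smul_single, smul_eq_mul, mul_one, Finsupp.coe_finsetSum,
      Finset.sum_apply, Finsupp.single_apply, Finset.sum_ite_eq', Finset.mem_univ, ↓reduceIte] at h
    simp [Matrix.one_apply, h, eq_comm]

end CoefMatrix

namespace IsMultiplicativeMatrix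

variable {ι : Type} [Fintype ι] [DecidableEq ι] {M : Matrix ι ι A}

theorem comul_apply (hM : IsMultiplicativeMatrix K M) (i j : ι) :
    Coalgebra.comul (R := K) (M i j) = ∑ l, M i l ⊗ₜ[K] M l j := by
  simpa [Matrix.includeLeft_mul_includeRight_apply] using congr($(hM.1) i j)

theorem mul_map_antipode (hM : IsMultiplicativeMatrix K M) : M * M.map S = 1 := by
  ext i j
  have h := HopfAlgebra.mul_antipode_lTensor_comul_apply (R := K) (M i j)
  rw [← Matrix.map_one (algebraMap K A) (map_zero _) (map_one _), ← hM.2]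
  simpa [hM.comul_apply, Matrix.mul_apply] using h

theorem map_antipode_mul (hM : IsMultiplicativeMatrix K M) : M.map S * M = 1 := by
  ext i j
  have h := HopfAlgebra.mul_antipode_rTensor_comul_apply (R := K) (M i j)
  rw [← Matrix.map_one (algebraMap K A) (map_zero _) (map_one _), ← hM.2]
  simpa [hM.comul_apply, Matrix.mul_apply] using h

/-- `Δ ∘ S` is computed by inverting `Δ M = Mᴸ Mᴿ` in the matrix ring over `A ⊗ A`. -/
theorem map_antipode_map_comul (hM : IsMultiplicativeMatrix K M) :
    (M.map S).map (Bialgebra.comulAlgHom K A) = (M.map S).map inr * (M.map S).map inl := by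
  refine left_inv_eq_right_inv (a := M.map (Bialgebra.comulAlgHom K A)) ?_ ?_
  · rw [← Matrix.map_mul, hM.map_antipode_mul, Matrix.map_one _ (map_zero _) (map_one _)]
  · rw [hM.1, mul_assoc, ← mul_assoc (M.map inr), ← Matrix.map_mul, hM.mul_map_antipode,
      Matrix.map_one _ (map_zero _) (map_one _), one_mul, ← Matrix.map_mul, hM.mul_map_antipode,
      Matrix.map_one _ (map_zero _) (map_one _)]

end IsMultiplicativeMatrix

theorem IsNormalizedIntegral.rid_lTensor_comul {wG : Module.Dual K A}
    (hwG : IsNormalizedIntegral wG) (x : A) :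
    TensorProduct.rid K A (wG.lTensor A (Coalgebra.comul x)) = wG x • 1 := by
  refine Module.eval_apply_injective K (LinearMap.ext fun w => ?_)
  have hconv : w ∘ₗ (TensorProduct.rid K A).toLinearMap ∘ₗ wG.lTensor A =
      LinearMap.mul' K K ∘ₗ TensorProduct.map w wG := by
    ext a b
    simp [mul_comm]
  calc w (TensorProduct.rid K A (wG.lTensor A (Coalgebra.comul x)))
      = conv w wG x := congr($hconv (Coalgebra.comul x))
    _ = w (wG x • 1) := by simp [(hwG.2 w).1, mul_comm]

section Reynolds

variable {ι κ : Type} [Fintype ι] [DecidableEq ι] [Fintype κ] [DecidableEq κ]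

variable (K) in
def intertwiners (C : Matrix κ κ A) (M : Matrix ι ι A) : Submodule K (Matrix κ ι K) where
  carrier := {F | C * F.map (algebraMap K A) = F.map (algebraMap K A) * M}
  add_mem' {F G} hF hG := by
    simp_all [Matrix.map_add, Matrix.mul_add, Matrix.add_mul]
  zero_mem' := by simp
  smul_mem' c F hF := by
    simp_all [Matrix.map_algebraMap_smul, Matrix.mul_smul, Matrix.smul_mul]

def reynolds (wG : Module.Dual K A) (C : Matrix κ κ A) (M : Matrix ι ι A) :
    Matrix κ ι K →ₗ[K] Matrix κ ι K where
  toFun F := (C * F.map (algebraMap K A) * M.map S).map wG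
  map_add' F G := by
    simp [Matrix.map_add, Matrix.mul_add, Matrix.add_mul]
  map_smul' c F := by
    rw [Matrix.map_algebraMap_smul, Matrix.mul_smul, Matrix.smul_mul, RingHom.id_apply]
    exact Matrix.map_smul wG c (map_smul wG c) _

theorem trace_reynolds (wG : Module.Dual K A) (C : Matrix κ κ A) (M : Matrix ι ι A) :
    LinearMap.trace K _ (reynolds wG C M) = wG (C.trace * (M.map S).trace) := by
  rw [LinearMap.trace_eq_matrix_trace K (Matrix.stdBasis K κ ι), Matrix.trace,
    Fintype.sum_prod_type, Matrix.trace, Matrix.trace, Finset.sum_mul_sum, map_sum]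
  refine Finset.sum_congr rfl fun k _ => ?_
  rw [map_sum]
  refine Finset.sum_congr rfl fun i _ => ?_
  simp [LinearMap.toMatrix_apply, Matrix.stdBasis_repr_apply, Matrix.stdBasis_eq_single, reynolds,
    Matrix.mul_single_one_mul_apply_same]

theorem reynolds_mem_intertwiners {wG : Module.Dual K A} (hwG : IsNormalizedIntegral wG)
    {C : Matrix κ κ A} (hC : IsMultiplicativeMatrix K C) {M : Matrix ι ι A}
    (hM : IsMultiplicativeMatrix K M) (F : Matrix κ ι K) :
    reynolds wG C M F ∈ intertwiners K C M := by
  set Y := C * F.map (algebraMap K A) * M.map S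
  have hY : Y.map (Bialgebra.comulAlgHom K A) = C.map inl * Y.map inr * (M.map S).map inl := by
    have hF : (F.map (algebraMap K A)).map (Bialgebra.comulAlgHom K A) =
        (F.map (algebraMap K A)).map inr := by
      ext; simp
    simp only [Y, Matrix.map_mul, hC.1, hF, hM.map_antipode_map_comul, Matrix.mul_assoc]
  have hP : (reynolds wG C M F).map (algebraMap K A) = Y.map (algebraMap K A ∘ wG) :=
    Matrix.map_map
  have hfix : C * (reynolds wG C M F).map (algebraMap K A) * M.map S =
      (reynolds wG C M F).map (algebraMap K A) := by
    -- apply `id ⊗ w_G` to `hY`; invariance of `w_G` collapses the left-hand side to `w_G(Y)`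
    have h := congr(Matrix.map $hY (TensorProduct.rid K A ∘ wG.lTensor A))
    rw [Matrix.map_includeLeft_mul_includeRight_mul_includeLeft, Matrix.map_map] at h
    rw [hP, ← h]
    congr 1
    ext y
    simp [hwG.rid_lTensor_comul, Algebra.algebraMap_eq_smul_one]
  show C * _ = _ * M
  conv_rhs => rw [← hfix]
  rw [Matrix.mul_assoc _ (M.map S), hM.map_antipode_mul, Matrix.mul_one]

omit [DecidableEq κ] in
theorem reynolds_apply_of_mem {wG : Module.Dual K A} (hwG : IsNormalizedIntegral wG)
    {C : Matrix κ κ A} {M : Matrix ι ι A} (hM : IsMultiplicativeMatrix K M) {F : Matrix κ ι K}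
    (hF : F ∈ intertwiners K C M) : reynolds wG C M F = F := by
  ext k i
  show (C * F.map (algebraMap K A) * M.map S).map wG k i = F k i
  rw [show C * F.map (algebraMap K A) = _ from hF, Matrix.mul_assoc, hM.mul_map_antipode,
    Matrix.mul_one]
  simp [Algebra.algebraMap_eq_smul_one, hwG.1]

theorem isProj_reynolds {wG : Module.Dual K A} (hwG : IsNormalizedIntegral wG)
    {C : Matrix κ κ A} (hC : IsMultiplicativeMatrix K C) {M : Matrix ι ι A}
    (hM : IsMultiplicativeMatrix K M) :
    LinearMap.IsProj (intertwiners K C M) (reynolds wG C M) :=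
  ⟨reynolds_mem_intertwiners hwG hC hM, fun _ hF => reynolds_apply_of_mem hwG hM hF⟩

theorem finrank_intertwiners {wG : Module.Dual K A} (hwG : IsNormalizedIntegral wG)
    {C : Matrix κ κ A} (hC : IsMultiplicativeMatrix K C) {M : Matrix ι ι A}
    (hM : IsMultiplicativeMatrix K M) :
    (Module.finrank K (intertwiners K C M) : K) = wG (C.trace * (M.map S).trace) := by
  rw [← trace_reynolds, (isProj_reynolds hwG hC hM).trace]

end Reynolds

section HomG

variable {V W : Type} [AddCommGroup V] [Module K V] [AddCommGroup W] [Module K W]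
  {ι κ : Type} [Fintype ι] [DecidableEq ι] [Fintype κ] [DecidableEq κ]

theorem toMatrix_mem_intertwiners_iff (bV : Module.Basis ι K V) (bW : Module.Basis κ K W)
    (ρV : V →ₗ[K] V ⊗[K] A) (ρW : W →ₗ[K] W ⊗[K] A) (f : V →ₗ[K] W) :
    LinearMap.toMatrix bV bW f ∈ intertwiners K (coefMatrix bW ρW) (coefMatrix bV ρV) ↔
      f ∈ homG ρV ρW := by
  set F := LinearMap.toMatrix bV bW f
  have hleft (j : ι) (m : κ) : equivFinsuppOfBasisLeft bW (ρW (f (bV j))) m =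
      (coefMatrix bW ρW * F.map (algebraMap K A)) m j := by
    rw [equivFinsuppOfBasisLeft_apply_eq_sum_coefMatrix, Matrix.mul_apply]
    simp [F, LinearMap.toMatrix_apply, Algebra.smul_def, mul_comm]
  have hright (j : ι) (m : κ) : equivFinsuppOfBasisLeft bW (f.rTensor A (ρV (bV j))) m =
      (F.map (algebraMap K A) * coefMatrix bV ρV) m j := by
    rw [equivFinsuppOfBasisLeft_rTensor bV bW, Matrix.mul_apply]
    simp [F, coefMatrix, Algebra.smul_def]
  calc F ∈ intertwiners K (coefMatrix bW ρW) (coefMatrix bV ρV)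
      ↔ ∀ j m, equivFinsuppOfBasisLeft bW (ρW (f (bV j))) m =
          equivFinsuppOfBasisLeft bW (f.rTensor A (ρV (bV j))) m := by
        simp only [hleft, hright]
        exact Matrix.ext_iff.symm.trans forall_comm
    _ ↔ ∀ j, ρW (f (bV j)) = f.rTensor A (ρV (bV j)) :=
        forall_congr' fun j => by
          rw [← (equivFinsuppOfBasisLeft bW).injective.eq_iff, Finsupp.ext_iff]
    _ ↔ f ∈ homG ρV ρW := ⟨fun h => bV.ext h, fun h j => congr($h (bV j))⟩

theorem map_toMatrix_homG (bV : Module.Basis ι K V) (bW : Module.Basis κ K W)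
    (ρV : V →ₗ[K] V ⊗[K] A) (ρW : W →ₗ[K] W ⊗[K] A) :
    (homG ρV ρW).map (LinearMap.toMatrix bV bW : (V →ₗ[K] W) →ₗ[K] Matrix κ ι K) =
      intertwiners K (coefMatrix bW ρW) (coefMatrix bV ρV) := by
  ext F
  rw [Submodule.mem_map_equiv, ← toMatrix_mem_intertwiners_iff bV bW,
    LinearEquiv.apply_symm_apply]

end HomG

/-- If `w_G` is a normalized invariant integral on `G = Spec A`, then for all
finite-dimensional `A`-comodules `(V, ρ_V)` and `(W, ρ_W)`,
`w_G(S(χ_V) χ_W) = dim_K Hom^G(V, W)`. -/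
theorem integral_char_mul_char_eq_dim_homG (wG : Module.Dual K A)
    (hwG : IsNormalizedIntegral wG) :
    ∀ (V : Type) [AddCommGroup V] [Module K V] [FiniteDimensional K V]
      (W : Type) [AddCommGroup W] [Module K W] [FiniteDimensional K W]
      (ρV : V →ₗ[K] V ⊗[K] A) (ρW : W →ₗ[K] W ⊗[K] A),
      IsComodule ρV → IsComodule ρW →
        ∀ (ι : Type) [Fintype ι] (bV : Module.Basis ι K V) (κ : Type) [Fintype κ] (bW : Module.Basis κ K W),
          wG (HopfAlgebra.antipode (R := K) (charOf bV ρV) * charOf bW ρW) =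
            (Module.finrank K (homG ρV ρW) : K) := by
  intro V _ _ _ W _ _ _ ρV ρW hV hW ι _ bV κ _ bW
  classical
  rw [← LinearEquiv.finrank_map_eq (LinearMap.toMatrix bV bW), map_toMatrix_homG,
    finrank_intertwiners hwG (hW.isMultiplicativeMatrix_coefMatrix bW)
      (hV.isMultiplicativeMatrix_coefMatrix bV),
    charOf_eq_trace_coefMatrix, charOf_eq_trace_coefMatrix, AddMonoidHom.map_trace, mul_comm]
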